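/- arXiv:2306.01744 — 4 statements merged into one kernel-verified Lean document; each statement's English description precedes it below -/
import Mathlib

section
/- Issue I1 occurs: there exist m : ℕ, a non-constant boolean classifier κ : (Fin m → Bool) → Bool, a point v : Fin m → Bool, and a feature i ∈ Fin m such that i is irrelevant (i belongs to no AXp of (κ, v)) and yet Sv(i) ≠ 0. -/
open scoped Classical

/-- `phi κ v S` is the average value of the boolean classifier `κ` (with
`true ↦ 1`, `false ↦ 0`) over all points agreeing with `v` on the features in `S`. -/
noncomputable def phi {m : ℕ} (κ : (Fin m → Bool) → Bool) (v : Fin m → Bool)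
    (S : Finset (Fin m)) : ℝ :=
  (1 / 2 ^ (m - S.card)) *
    ∑ x ∈ Finset.univ.filter (fun x : Fin m → Bool => ∀ i ∈ S, x i = v i),
      (if κ x then (1 : ℝ) else 0)

/-- The Shapley value of feature `i` for the classifier `κ` at the point `v`. -/
noncomputable def Sv {m : ℕ} (κ : (Fin m → Bool) → Bool) (v : Fin m → Bool)
    (i : Fin m) : ℝ :=
  ∑ S ∈ (Finset.univ.erase i).powerset,
    ((Nat.factorial S.card * Nat.factorial (m - S.card - 1) : ℝ) / Nat.factorial m) *
      (phi κ v (insert i S) - phi κ v S)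

/-- `WAXp κ v X` holds iff fixing the features of `X` to the values of `v`
suffices for the prediction `κ v`. -/
def WAXp {m : ℕ} (κ : (Fin m → Bool) → Bool) (v : Fin m → Bool)
    (X : Finset (Fin m)) : Prop :=
  ∀ x : Fin m → Bool, (∀ i ∈ X, x i = v i) → κ x = κ v

/-- `X` is an AXp iff it is a subset-minimal weak AXp. -/
def AXp {m : ℕ} (κ : (Fin m → Bool) → Bool) (v : Fin m → Bool)
    (X : Finset (Fin m)) : Prop :=
  WAXp κ v X ∧ ∀ X' ⊂ X, ¬ WAXp κ v X'

/-- Feature `i` is relevant iff it belongs to some AXp. -/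
def Relevant {m : ℕ} (κ : (Fin m → Bool) → Bool) (v : Fin m → Bool) (i : Fin m) : Prop :=
  ∃ X : Finset (Fin m), AXp κ v X ∧ i ∈ X

/-- Feature `i` is irrelevant iff it belongs to no AXp. -/
def Irrelevant {m : ℕ} (κ : (Fin m → Bool) → Bool) (v : Fin m → Bool) (i : Fin m) : Prop :=
  ¬ Relevant κ v i

lemma phi_eval (S : Finset (Fin 2)) :
    phi (fun x => x 0 && x 1) ![false, true] S =
      (1 / 2 ^ (2 - S.card)) *
        ((Finset.univ.filter (fun x : Fin 2 → Bool => ∀ i ∈ S, x i = ![false, true] i)).filter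
          (fun x => (x 0 && x 1) = true)).card := by
  rw [phi, Finset.sum_boole]

lemma sv_val : Sv (fun x : Fin 2 → Bool => x 0 && x 1) ![false, true] 1 = 1 / 8 := by
  rw [Sv]
  have he : (Finset.univ.erase (1 : Fin 2)) = {0} := by decide
  rw [he, show ({0} : Finset (Fin 2)).powerset = {∅, {0}} from by decide]
  rw [show ({∅, {0}} : Finset (Finset (Fin 2))) = insert ∅ {({0} : Finset (Fin 2))} from rfl,
    Finset.sum_insert (by decide), Finset.sum_singleton]
  have h1 : (insert (1 : Fin 2) (∅ : Finset (Fin 2))) = {1} := by decide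
  have h2 : (insert (1 : Fin 2) ({0} : Finset (Fin 2))) = {0, 1} := by decide
  rw [h1, h2, phi_eval, phi_eval, phi_eval, phi_eval]
  have c1 : (Finset.filter (fun x : Fin 2 → Bool => x 0 = true ∧ x 1 = true) (Finset.filter (fun x : Fin 2 → Bool => x 1 = true) Finset.univ)).card = 1 := by decide
  have c2 : (Finset.filter (fun x : Fin 2 → Bool => x 0 = true ∧ x 1 = true) (Finset.univ : Finset (Fin 2 → Bool))).card = 1 := by decide
  have c3 : (Finset.filter (fun x : Fin 2 → Bool => x 0 = true ∧ x 1 = true) (Finset.filter (fun x : Fin 2 → Bool => x 0 = false ∧ x 1 = true) Finset.univ)).card = 0 := by decide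
  have c4 : (Finset.filter (fun x : Fin 2 → Bool => x 0 = true ∧ x 1 = true) (Finset.filter (fun x : Fin 2 → Bool => x 0 = false) Finset.univ)).card = 0 := by decide
  norm_num [c1, c2, c3, c4, Nat.factorial]

/-- Issue I1: some non-constant boolean classifier, point and feature are such that
the feature is irrelevant yet has a non-zero Shapley value. -/
theorem issue_I1_occurs :
    ∃ (m : ℕ) (κ : (Fin m → Bool) → Bool) (v : Fin m → Bool) (i : Fin m),
      (∃ x y : Fin m → Bool, κ x ≠ κ y) ∧
      Irrelevant κ v i ∧ Sv κ v i ≠ 0 := by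
  refine ⟨2, fun x => x 0 && x 1, ![false, true], 1,
    ⟨![true, true], ![false, false], by decide⟩, ?_, ?_⟩
  · unfold Irrelevant Relevant AXp WAXp
    decide
  · rw [sv_val]; norm_num
end

section
/- Issue I2 occurs: there exist m : ℕ, a non-constant boolean classifier κ : (Fin m → Bool) → Bool, a point v : Fin m → Bool, and features i₁, i₂ ∈ Fin m such that i₁ is irrelevant, i₂ is relevant, and |Sv(i₁)| > |Sv(i₂)|. -/
open scoped Classical

def myk (x : Fin 4 → Bool) : Bool :=
  x 0 && ((!x 1 && x 2 && x 3) || (x 1 && !x 2 && x 3) || (x 1 && x 2 && !x 3))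

def vv : Fin 4 → Bool := fun _ => true

lemma key (κ : (Fin 4 → Bool) → Bool) (v : Fin 4 → Bool) (S : Finset (Fin 4)) :
    phi κ v S =
      ((Finset.univ.filter
        (fun x : Fin 4 → Bool => (∀ j ∈ S, x j = v j) ∧ κ x = true)).card : ℝ)
        / 2 ^ (4 - S.card) := by
  rw [phi, Finset.sum_boole, Finset.filter_filter]
  ring

lemma hSv0 : Sv myk vv 0 = 11/64 := by
  have e : (Finset.univ.erase (0:Fin 4)).powerset = ({∅, ({1} : Finset (Fin 4)), ({2} : Finset (Fin 4)), ({1, 2} : Finset (Fin 4)), ({3} : Finset (Fin 4)), ({1, 3} : Finset (Fin 4)), ({2, 3} : Finset (Fin 4)), ({1, 2, 3} : Finset (Fin 4))} : Finset (Finset (Fin 4))) := by decide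
  rw [Sv, e]
  rw [Finset.sum_insert (by decide), Finset.sum_insert (by decide), Finset.sum_insert (by decide), Finset.sum_insert (by decide), Finset.sum_insert (by decide), Finset.sum_insert (by decide), Finset.sum_insert (by decide), Finset.sum_singleton]
  simp only [key]
  simp only [(show Finset.card (∅ : Finset (Fin 4)) = 0 from by decide),
    (show Finset.card (insert (0:Fin 4) (∅ : Finset (Fin 4))) = 1 from by decide),
    (show (Finset.univ.filter (fun x : Fin 4 → Bool => (∀ j ∈ (∅ : Finset (Fin 4)), x j = vv j) ∧ myk x = true)).card = 3 from by decide),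
    (show (Finset.univ.filter (fun x : Fin 4 → Bool => (∀ j ∈ (insert (0:Fin 4) (∅ : Finset (Fin 4))), x j = vv j) ∧ myk x = true)).card = 3 from by decide),
    (show Finset.card ({1} : Finset (Fin 4)) = 1 from by decide),
    (show Finset.card (insert (0:Fin 4) ({1} : Finset (Fin 4))) = 2 from by decide),
    (show (Finset.univ.filter (fun x : Fin 4 → Bool => (∀ j ∈ ({1} : Finset (Fin 4)), x j = vv j) ∧ myk x = true)).card = 2 from by decide),
    (show (Finset.univ.filter (fun x : Fin 4 → Bool => (∀ j ∈ (insert (0:Fin 4) ({1} : Finset (Fin 4))), x j = vv j) ∧ myk x = true)).card = 2 from by decide),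
    (show Finset.card ({2} : Finset (Fin 4)) = 1 from by decide),
    (show Finset.card (insert (0:Fin 4) ({2} : Finset (Fin 4))) = 2 from by decide),
    (show (Finset.univ.filter (fun x : Fin 4 → Bool => (∀ j ∈ ({2} : Finset (Fin 4)), x j = vv j) ∧ myk x = true)).card = 2 from by decide),
    (show (Finset.univ.filter (fun x : Fin 4 → Bool => (∀ j ∈ (insert (0:Fin 4) ({2} : Finset (Fin 4))), x j = vv j) ∧ myk x = true)).card = 2 from by decide),
    (show Finset.card ({1, 2} : Finset (Fin 4)) = 2 from by decide),
    (show Finset.card (insert (0:Fin 4) ({1, 2} : Finset (Fin 4))) = 3 from by decide),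
    (show (Finset.univ.filter (fun x : Fin 4 → Bool => (∀ j ∈ ({1, 2} : Finset (Fin 4)), x j = vv j) ∧ myk x = true)).card = 1 from by decide),
    (show (Finset.univ.filter (fun x : Fin 4 → Bool => (∀ j ∈ (insert (0:Fin 4) ({1, 2} : Finset (Fin 4))), x j = vv j) ∧ myk x = true)).card = 1 from by decide),
    (show Finset.card ({3} : Finset (Fin 4)) = 1 from by decide),
    (show Finset.card (insert (0:Fin 4) ({3} : Finset (Fin 4))) = 2 from by decide),
    (show (Finset.univ.filter (fun x : Fin 4 → Bool => (∀ j ∈ ({3} : Finset (Fin 4)), x j = vv j) ∧ myk x = true)).card = 2 from by decide),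
    (show (Finset.univ.filter (fun x : Fin 4 → Bool => (∀ j ∈ (insert (0:Fin 4) ({3} : Finset (Fin 4))), x j = vv j) ∧ myk x = true)).card = 2 from by decide),
    (show Finset.card ({1, 3} : Finset (Fin 4)) = 2 from by decide),
    (show Finset.card (insert (0:Fin 4) ({1, 3} : Finset (Fin 4))) = 3 from by decide),
    (show (Finset.univ.filter (fun x : Fin 4 → Bool => (∀ j ∈ ({1, 3} : Finset (Fin 4)), x j = vv j) ∧ myk x = true)).card = 1 from by decide),
    (show (Finset.univ.filter (fun x : Fin 4 → Bool => (∀ j ∈ (insert (0:Fin 4) ({1, 3} : Finset (Fin 4))), x j = vv j) ∧ myk x = true)).card = 1 from by decide),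
    (show Finset.card ({2, 3} : Finset (Fin 4)) = 2 from by decide),
    (show Finset.card (insert (0:Fin 4) ({2, 3} : Finset (Fin 4))) = 3 from by decide),
    (show (Finset.univ.filter (fun x : Fin 4 → Bool => (∀ j ∈ ({2, 3} : Finset (Fin 4)), x j = vv j) ∧ myk x = true)).card = 1 from by decide),
    (show (Finset.univ.filter (fun x : Fin 4 → Bool => (∀ j ∈ (insert (0:Fin 4) ({2, 3} : Finset (Fin 4))), x j = vv j) ∧ myk x = true)).card = 1 from by decide),
    (show Finset.card ({1, 2, 3} : Finset (Fin 4)) = 3 from by decide),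
    (show Finset.card (insert (0:Fin 4) ({1, 2, 3} : Finset (Fin 4))) = 4 from by decide),
    (show (Finset.univ.filter (fun x : Fin 4 → Bool => (∀ j ∈ ({1, 2, 3} : Finset (Fin 4)), x j = vv j) ∧ myk x = true)).card = 0 from by decide),
    (show (Finset.univ.filter (fun x : Fin 4 → Bool => (∀ j ∈ (insert (0:Fin 4) ({1, 2, 3} : Finset (Fin 4))), x j = vv j) ∧ myk x = true)).card = 0 from by decide),
    (show Nat.factorial 0 = 1 from rfl),
    (show Nat.factorial 1 = 1 from rfl),
    (show Nat.factorial 2 = 2 from rfl),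
    (show Nat.factorial 3 = 6 from rfl),
    (show Nat.factorial 4 = 24 from rfl)]
  norm_num

lemma hSv1 : Sv myk vv 1 = -(23/192) := by
  have e : (Finset.univ.erase (1:Fin 4)).powerset = ({∅, ({0} : Finset (Fin 4)), ({2} : Finset (Fin 4)), ({0, 2} : Finset (Fin 4)), ({3} : Finset (Fin 4)), ({0, 3} : Finset (Fin 4)), ({2, 3} : Finset (Fin 4)), ({0, 2, 3} : Finset (Fin 4))} : Finset (Finset (Fin 4))) := by decide
  rw [Sv, e]
  rw [Finset.sum_insert (by decide), Finset.sum_insert (by decide), Finset.sum_insert (by decide), Finset.sum_insert (by decide), Finset.sum_insert (by decide), Finset.sum_insert (by decide), Finset.sum_insert (by decide), Finset.sum_singleton]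
  simp only [key]
  simp only [(show Finset.card (∅ : Finset (Fin 4)) = 0 from by decide),
    (show Finset.card (insert (1:Fin 4) (∅ : Finset (Fin 4))) = 1 from by decide),
    (show (Finset.univ.filter (fun x : Fin 4 → Bool => (∀ j ∈ (∅ : Finset (Fin 4)), x j = vv j) ∧ myk x = true)).card = 3 from by decide),
    (show (Finset.univ.filter (fun x : Fin 4 → Bool => (∀ j ∈ (insert (1:Fin 4) (∅ : Finset (Fin 4))), x j = vv j) ∧ myk x = true)).card = 2 from by decide),
    (show Finset.card ({0} : Finset (Fin 4)) = 1 from by decide),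
    (show Finset.card (insert (1:Fin 4) ({0} : Finset (Fin 4))) = 2 from by decide),
    (show (Finset.univ.filter (fun x : Fin 4 → Bool => (∀ j ∈ ({0} : Finset (Fin 4)), x j = vv j) ∧ myk x = true)).card = 3 from by decide),
    (show (Finset.univ.filter (fun x : Fin 4 → Bool => (∀ j ∈ (insert (1:Fin 4) ({0} : Finset (Fin 4))), x j = vv j) ∧ myk x = true)).card = 2 from by decide),
    (show Finset.card ({2} : Finset (Fin 4)) = 1 from by decide),
    (show Finset.card (insert (1:Fin 4) ({2} : Finset (Fin 4))) = 2 from by decide),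
    (show (Finset.univ.filter (fun x : Fin 4 → Bool => (∀ j ∈ ({2} : Finset (Fin 4)), x j = vv j) ∧ myk x = true)).card = 2 from by decide),
    (show (Finset.univ.filter (fun x : Fin 4 → Bool => (∀ j ∈ (insert (1:Fin 4) ({2} : Finset (Fin 4))), x j = vv j) ∧ myk x = true)).card = 1 from by decide),
    (show Finset.card ({0, 2} : Finset (Fin 4)) = 2 from by decide),
    (show Finset.card (insert (1:Fin 4) ({0, 2} : Finset (Fin 4))) = 3 from by decide),
    (show (Finset.univ.filter (fun x : Fin 4 → Bool => (∀ j ∈ ({0, 2} : Finset (Fin 4)), x j = vv j) ∧ myk x = true)).card = 2 from by decide),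
    (show (Finset.univ.filter (fun x : Fin 4 → Bool => (∀ j ∈ (insert (1:Fin 4) ({0, 2} : Finset (Fin 4))), x j = vv j) ∧ myk x = true)).card = 1 from by decide),
    (show Finset.card ({3} : Finset (Fin 4)) = 1 from by decide),
    (show Finset.card (insert (1:Fin 4) ({3} : Finset (Fin 4))) = 2 from by decide),
    (show (Finset.univ.filter (fun x : Fin 4 → Bool => (∀ j ∈ ({3} : Finset (Fin 4)), x j = vv j) ∧ myk x = true)).card = 2 from by decide),
    (show (Finset.univ.filter (fun x : Fin 4 → Bool => (∀ j ∈ (insert (1:Fin 4) ({3} : Finset (Fin 4))), x j = vv j) ∧ myk x = true)).card = 1 from by decide),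
    (show Finset.card ({0, 3} : Finset (Fin 4)) = 2 from by decide),
    (show Finset.card (insert (1:Fin 4) ({0, 3} : Finset (Fin 4))) = 3 from by decide),
    (show (Finset.univ.filter (fun x : Fin 4 → Bool => (∀ j ∈ ({0, 3} : Finset (Fin 4)), x j = vv j) ∧ myk x = true)).card = 2 from by decide),
    (show (Finset.univ.filter (fun x : Fin 4 → Bool => (∀ j ∈ (insert (1:Fin 4) ({0, 3} : Finset (Fin 4))), x j = vv j) ∧ myk x = true)).card = 1 from by decide),
    (show Finset.card ({2, 3} : Finset (Fin 4)) = 2 from by decide),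
    (show Finset.card (insert (1:Fin 4) ({2, 3} : Finset (Fin 4))) = 3 from by decide),
    (show (Finset.univ.filter (fun x : Fin 4 → Bool => (∀ j ∈ ({2, 3} : Finset (Fin 4)), x j = vv j) ∧ myk x = true)).card = 1 from by decide),
    (show (Finset.univ.filter (fun x : Fin 4 → Bool => (∀ j ∈ (insert (1:Fin 4) ({2, 3} : Finset (Fin 4))), x j = vv j) ∧ myk x = true)).card = 0 from by decide),
    (show Finset.card ({0, 2, 3} : Finset (Fin 4)) = 3 from by decide),
    (show Finset.card (insert (1:Fin 4) ({0, 2, 3} : Finset (Fin 4))) = 4 from by decide),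
    (show (Finset.univ.filter (fun x : Fin 4 → Bool => (∀ j ∈ ({0, 2, 3} : Finset (Fin 4)), x j = vv j) ∧ myk x = true)).card = 1 from by decide),
    (show (Finset.univ.filter (fun x : Fin 4 → Bool => (∀ j ∈ (insert (1:Fin 4) ({0, 2, 3} : Finset (Fin 4))), x j = vv j) ∧ myk x = true)).card = 0 from by decide),
    (show Nat.factorial 0 = 1 from rfl),
    (show Nat.factorial 1 = 1 from rfl),
    (show Nat.factorial 2 = 2 from rfl),
    (show Nat.factorial 3 = 6 from rfl),
    (show Nat.factorial 4 = 24 from rfl)]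
  norm_num


/-- Issue I2: some non-constant boolean classifier, point and pair of features are
such that one feature is irrelevant, the other is relevant, and the irrelevant
feature has the larger Shapley value in absolute value. -/
theorem issue_I2_occurs :
    ∃ (m : ℕ) (κ : (Fin m → Bool) → Bool) (v : Fin m → Bool) (i₁ i₂ : Fin m),
      (∃ x y : Fin m → Bool, κ x ≠ κ y) ∧
      Irrelevant κ v i₁ ∧ Relevant κ v i₂ ∧ |Sv κ v i₁| > |Sv κ v i₂| := by
  refine ⟨4, myk, vv, 0, 1, ⟨(fun j => j ≠ 1), (fun _ => true), by decide⟩, ?_, ?_, ?_⟩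
  · unfold Irrelevant Relevant AXp WAXp
    decide
  · unfold Relevant AXp WAXp
    decide
  · rw [hSv0, hSv1, abs_of_pos (by norm_num), abs_of_neg (by norm_num)]
    norm_num
end

section
/- Issue I4 occurs: there exist m : ℕ, a non-constant boolean classifier κ : (Fin m → Bool) → Bool, a point v : Fin m → Bool, and features i₁, i₂ ∈ Fin m such that i₁ is irrelevant with Sv(i₁) ≠ 0, while i₂ is relevant with Sv(i₂) = 0. -/
open scoped Classical

def myκ : (Fin 4 → Bool) → Bool := fun x =>
  (!x 0 && !x 1 && x 2 && x 3) || (!x 0 && x 1 && !x 2 && !x 3)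

def myv : Fin 4 → Bool := fun _ => false

def cnt (S : Finset (Fin 4)) : ℕ :=
  (Finset.univ.filter (fun x : Fin 4 → Bool => (∀ i ∈ S, x i = myv i) ∧ myκ x = true)).card

lemma phi_eq (S : Finset (Fin 4)) :
    phi myκ myv S = (cnt S : ℝ) / 2 ^ (4 - S.card) := by
  unfold phi cnt
  rw [Finset.sum_boole, Finset.filter_filter]
  rw [one_div, inv_mul_eq_div]

lemma sv0 : Sv myκ myv 0 = 1/12 := by
  unfold Sv
  rw [show (Finset.univ.erase (0:Fin 4)).powerset = ({(∅ : Finset (Fin 4)), ({1} : Finset (Fin 4)), ({2} : Finset (Fin 4)), ({3} : Finset (Fin 4)), ({1,2} : Finset (Fin 4)), ({1,3} : Finset (Fin 4)), ({2,3} : Finset (Fin 4)), ({1,2,3} : Finset (Fin 4))} : Finset (Finset (Fin 4))) from by decide]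
  rw [Finset.sum_insert (by decide)]
  rw [Finset.sum_insert (by decide)]
  rw [Finset.sum_insert (by decide)]
  rw [Finset.sum_insert (by decide)]
  rw [Finset.sum_insert (by decide)]
  rw [Finset.sum_insert (by decide)]
  rw [Finset.sum_insert (by decide)]
  rw [Finset.sum_singleton]
  simp only [phi_eq,
    show cnt (∅ : Finset (Fin 4)) = 2 from by decide,
    show cnt (insert (0:Fin 4) (∅ : Finset (Fin 4))) = 2 from by decide,
    show ((∅ : Finset (Fin 4))).card = 0 from by decide,
    show ((insert (0:Fin 4) (∅ : Finset (Fin 4)))).card = 1 from by decide,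
    show cnt ({1} : Finset (Fin 4)) = 1 from by decide,
    show cnt (insert (0:Fin 4) ({1} : Finset (Fin 4))) = 1 from by decide,
    show (({1} : Finset (Fin 4))).card = 1 from by decide,
    show ((insert (0:Fin 4) ({1} : Finset (Fin 4)))).card = 2 from by decide,
    show cnt ({2} : Finset (Fin 4)) = 1 from by decide,
    show cnt (insert (0:Fin 4) ({2} : Finset (Fin 4))) = 1 from by decide,
    show (({2} : Finset (Fin 4))).card = 1 from by decide,
    show ((insert (0:Fin 4) ({2} : Finset (Fin 4)))).card = 2 from by decide,
    show cnt ({3} : Finset (Fin 4)) = 1 from by decide,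
    show cnt (insert (0:Fin 4) ({3} : Finset (Fin 4))) = 1 from by decide,
    show (({3} : Finset (Fin 4))).card = 1 from by decide,
    show ((insert (0:Fin 4) ({3} : Finset (Fin 4)))).card = 2 from by decide,
    show cnt ({1,2} : Finset (Fin 4)) = 0 from by decide,
    show cnt (insert (0:Fin 4) ({1,2} : Finset (Fin 4))) = 0 from by decide,
    show (({1,2} : Finset (Fin 4))).card = 2 from by decide,
    show ((insert (0:Fin 4) ({1,2} : Finset (Fin 4)))).card = 3 from by decide,
    show cnt ({1,3} : Finset (Fin 4)) = 0 from by decide,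
    show cnt (insert (0:Fin 4) ({1,3} : Finset (Fin 4))) = 0 from by decide,
    show (({1,3} : Finset (Fin 4))).card = 2 from by decide,
    show ((insert (0:Fin 4) ({1,3} : Finset (Fin 4)))).card = 3 from by decide,
    show cnt ({2,3} : Finset (Fin 4)) = 1 from by decide,
    show cnt (insert (0:Fin 4) ({2,3} : Finset (Fin 4))) = 1 from by decide,
    show (({2,3} : Finset (Fin 4))).card = 2 from by decide,
    show ((insert (0:Fin 4) ({2,3} : Finset (Fin 4)))).card = 3 from by decide,
    show cnt ({1,2,3} : Finset (Fin 4)) = 0 from by decide,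
    show cnt (insert (0:Fin 4) ({1,2,3} : Finset (Fin 4))) = 0 from by decide,
    show (({1,2,3} : Finset (Fin 4))).card = 3 from by decide,
    show ((insert (0:Fin 4) ({1,2,3} : Finset (Fin 4)))).card = 4 from by decide]
  norm_num [Nat.factorial]

lemma sv2 : Sv myκ myv 2 = 0 := by
  unfold Sv
  rw [show (Finset.univ.erase (2:Fin 4)).powerset = ({(∅ : Finset (Fin 4)), ({0} : Finset (Fin 4)), ({1} : Finset (Fin 4)), ({3} : Finset (Fin 4)), ({0,1} : Finset (Fin 4)), ({0,3} : Finset (Fin 4)), ({1,3} : Finset (Fin 4)), ({0,1,3} : Finset (Fin 4))} : Finset (Finset (Fin 4))) from by decide]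
  rw [Finset.sum_insert (by decide)]
  rw [Finset.sum_insert (by decide)]
  rw [Finset.sum_insert (by decide)]
  rw [Finset.sum_insert (by decide)]
  rw [Finset.sum_insert (by decide)]
  rw [Finset.sum_insert (by decide)]
  rw [Finset.sum_insert (by decide)]
  rw [Finset.sum_singleton]
  simp only [phi_eq,
    show cnt (∅ : Finset (Fin 4)) = 2 from by decide,
    show cnt (insert (2:Fin 4) (∅ : Finset (Fin 4))) = 1 from by decide,
    show ((∅ : Finset (Fin 4))).card = 0 from by decide,
    show ((insert (2:Fin 4) (∅ : Finset (Fin 4)))).card = 1 from by decide,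
    show cnt ({0} : Finset (Fin 4)) = 2 from by decide,
    show cnt (insert (2:Fin 4) ({0} : Finset (Fin 4))) = 1 from by decide,
    show (({0} : Finset (Fin 4))).card = 1 from by decide,
    show ((insert (2:Fin 4) ({0} : Finset (Fin 4)))).card = 2 from by decide,
    show cnt ({1} : Finset (Fin 4)) = 1 from by decide,
    show cnt (insert (2:Fin 4) ({1} : Finset (Fin 4))) = 0 from by decide,
    show (({1} : Finset (Fin 4))).card = 1 from by decide,
    show ((insert (2:Fin 4) ({1} : Finset (Fin 4)))).card = 2 from by decide,
    show cnt ({3} : Finset (Fin 4)) = 1 from by decide,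
    show cnt (insert (2:Fin 4) ({3} : Finset (Fin 4))) = 1 from by decide,
    show (({3} : Finset (Fin 4))).card = 1 from by decide,
    show ((insert (2:Fin 4) ({3} : Finset (Fin 4)))).card = 2 from by decide,
    show cnt ({0,1} : Finset (Fin 4)) = 1 from by decide,
    show cnt (insert (2:Fin 4) ({0,1} : Finset (Fin 4))) = 0 from by decide,
    show (({0,1} : Finset (Fin 4))).card = 2 from by decide,
    show ((insert (2:Fin 4) ({0,1} : Finset (Fin 4)))).card = 3 from by decide,
    show cnt ({0,3} : Finset (Fin 4)) = 1 from by decide,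
    show cnt (insert (2:Fin 4) ({0,3} : Finset (Fin 4))) = 1 from by decide,
    show (({0,3} : Finset (Fin 4))).card = 2 from by decide,
    show ((insert (2:Fin 4) ({0,3} : Finset (Fin 4)))).card = 3 from by decide,
    show cnt ({1,3} : Finset (Fin 4)) = 0 from by decide,
    show cnt (insert (2:Fin 4) ({1,3} : Finset (Fin 4))) = 0 from by decide,
    show (({1,3} : Finset (Fin 4))).card = 2 from by decide,
    show ((insert (2:Fin 4) ({1,3} : Finset (Fin 4)))).card = 3 from by decide,
    show cnt ({0,1,3} : Finset (Fin 4)) = 0 from by decide,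
    show cnt (insert (2:Fin 4) ({0,1,3} : Finset (Fin 4))) = 0 from by decide,
    show (({0,1,3} : Finset (Fin 4))).card = 3 from by decide,
    show ((insert (2:Fin 4) ({0,1,3} : Finset (Fin 4)))).card = 4 from by decide]
  norm_num [Nat.factorial]

/-- Issue I4: some non-constant boolean classifier, point and pair of features are
such that one feature is irrelevant with non-zero Shapley value, while the other is
relevant with Shapley value zero. -/
theorem issue_I4_occurs :
    ∃ (m : ℕ) (κ : (Fin m → Bool) → Bool) (v : Fin m → Bool) (i₁ i₂ : Fin m),
      (∃ x y : Fin m → Bool, κ x ≠ κ y) ∧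
      (Irrelevant κ v i₁ ∧ Sv κ v i₁ ≠ 0) ∧
      (Relevant κ v i₂ ∧ Sv κ v i₂ = 0) := by
  refine ⟨4, myκ, myv, 0, 2, ⟨![false,true,false,false], myv, by decide⟩, ⟨?_, ?_⟩, ⟨?_, ?_⟩⟩
  · unfold Irrelevant Relevant AXp WAXp; decide
  · rw [sv0]; norm_num
  · unfold Relevant AXp WAXp; decide
  · exact sv2
end

section
/- Issue I5 occurs: there exist m : ℕ, a non-constant boolean classifier κ : (Fin m → Bool) → Bool, a point v : Fin m → Bool, and a feature i ∈ Fin m such that i is irrelevant and yet |Sv(j)| < |Sv(i)| for every feature j ≠ i, i.e., the irrelevant feature has strictly the largest Shapley value in absolute value. -/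
open scoped Classical

/-!
Take `κ x = (exactly one of x 0, x 1, x 2 is set) ∧ ¬ x 3` at the point `v = 0`, where
`κ v = false`. Setting feature 3 already forces the prediction `false`, so feature 3 can be
dropped from every weak AXp and lies in no AXp. Its Shapley value is nevertheless `11/64`, while
features 0, 1, 2 get `-23/192` each. These values are evaluated by the kernel on rational-valued
copies of `phi` and `Sv`.
-/

open Finset

section Irrelevance

variable {m : ℕ} {κ : (Fin m → Bool) → Bool} {v : Fin m → Bool} {i : Fin m}

theorem WAXp.erase_of_forall_ne {X : Finset (Fin m)} (hX : WAXp κ v X)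
    (hi : ∀ x, x i ≠ v i → κ x = κ v) :
    WAXp κ v (X.erase i) := by
  intro x hx
  by_cases hxi : x i = v i
  · refine hX x fun j hj => ?_
    by_cases hji : j = i
    · exact hji ▸ hxi
    · exact hx j (mem_erase.mpr ⟨hji, hj⟩)
  · exact hi x hxi

theorem irrelevant_of_forall_ne (hi : ∀ x, x i ≠ v i → κ x = κ v) : Irrelevant κ v i := by
  rintro ⟨X, ⟨hX, hmin⟩, hiX⟩
  exact hmin (X.erase i) (erase_ssubset hiX) (hX.erase_of_forall_ne hi)

end Irrelevance

section RationalShapley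

variable {m : ℕ} (κ : (Fin m → Bool) → Bool) (v : Fin m → Bool)

def phiRat (S : Finset (Fin m)) : ℚ :=
  (#{x | (∀ i ∈ S, x i = v i) ∧ κ x = true} : ℚ) / 2 ^ (m - #S)

def SvRat (i : Fin m) : ℚ :=
  ∑ S ∈ (univ.erase i).powerset,
    ((Nat.factorial #S * Nat.factorial (m - #S - 1) : ℚ) / Nat.factorial m) *
      (phiRat κ v (insert i S) - phiRat κ v S)

theorem phi_eq_phiRat (S : Finset (Fin m)) : phi κ v S = phiRat κ v S := by
  rw [phi, phiRat, sum_boole, filter_filter]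
  push_cast
  ring

theorem Sv_eq_SvRat (i : Fin m) : Sv κ v i = SvRat κ v i := by
  simp only [Sv, SvRat, phi_eq_phiRat]
  push_cast
  rfl

end RationalShapley

def exactlyOneOfFirstThreeAndNotLast : (Fin 4 → Bool) → Bool := fun x =>
  ((x 0 && !x 1 && !x 2) || (!x 0 && x 1 && !x 2) || (!x 0 && !x 1 && x 2)) && !x 3

theorem SvRat_exactlyOneOfFirstThreeAndNotLast :
    SvRat exactlyOneOfFirstThreeAndNotLast (fun _ => false) =
      ![-23/192, -23/192, -23/192, 11/64] := by
  decide +kernel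

/-- Issue I5: some non-constant boolean classifier, point and feature are such that
the feature is irrelevant and yet it has strictly the largest Shapley value in
absolute value among all features. -/
theorem issue_I5_occurs :
    ∃ (m : ℕ) (κ : (Fin m → Bool) → Bool) (v : Fin m → Bool) (i : Fin m),
      (∃ x y : Fin m → Bool, κ x ≠ κ y) ∧
      Irrelevant κ v i ∧ ∀ j : Fin m, j ≠ i → |Sv κ v j| < |Sv κ v i| := by
  refine ⟨4, exactlyOneOfFirstThreeAndNotLast, fun _ => false, 3,
    ⟨![true, false, false, false], fun _ => false, by decide⟩,
    irrelevant_of_forall_ne fun x hx => ?_, fun j hj => ?_⟩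
  · simp_all [exactlyOneOfFirstThreeAndNotLast]
  · simp only [Sv_eq_SvRat, SvRat_exactlyOneOfFirstThreeAndNotLast]
    fin_cases j <;> simp at hj ⊢ <;> norm_num [abs_of_pos]
end
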